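/- The automorphism aut^{(1)}_{(μ,g)} of k⟨⟨e₀,e₁⟩⟩ given by e₀ ↦ μ g e₀ g^{-1}, e₁ ↦ μ e₁ (for g invertible) restricts to a topological algebra automorphism of the completed subalgebra Ŵ^DR = k1 ⊕ V̂^DR e₁. -/

import Mathlib

/-- Words in the letters `e₀, e₁`. -/
abbrev Word := List (Fin 2)

/-- The completed free associative algebra `V̂^DR = k⟨⟨e₀,e₁⟩⟩`: a
noncommutative formal power series is the function assigning to each word its
coefficient, with the convolution product. -/
def NCS (k : Type) : Type := Word → k

namespace NCS

variable {k : Type} [CommRing k]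

instance : AddCommGroup (NCS k) := Pi.addCommGroup

instance : Module k (NCS k) := Pi.module _ _ _

instance : Mul (NCS k) :=
  ⟨fun f g => fun w => ∑ i ∈ Finset.range (w.length + 1), f (w.take i) * g (w.drop i)⟩

instance : One (NCS k) := ⟨fun w => if w = [] then 1 else 0⟩

noncomputable instance : Ring (NCS k) :=
  { (inferInstance : AddCommGroup (NCS k)),
    (inferInstance : Mul (NCS k)), (inferInstance : One (NCS k)) with
    left_distrib := by
      intro a b c; funext w
      show (∑ i ∈ Finset.range (w.length + 1), a (w.take i) * (b (w.drop i) + c (w.drop i)))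
        = (∑ i ∈ Finset.range (w.length + 1), a (w.take i) * b (w.drop i))
          + (∑ i ∈ Finset.range (w.length + 1), a (w.take i) * c (w.drop i))
      simp [mul_add, Finset.sum_add_distrib]
    right_distrib := by
      intro a b c; funext w
      show (∑ i ∈ Finset.range (w.length + 1), (a (w.take i) + b (w.take i)) * c (w.drop i))
        = (∑ i ∈ Finset.range (w.length + 1), a (w.take i) * c (w.drop i))
          + (∑ i ∈ Finset.range (w.length + 1), b (w.take i) * c (w.drop i))
      simp [add_mul, Finset.sum_add_distrib]
    zero_mul := by
      intro a; funext w
      show (∑ i ∈ Finset.range (w.length + 1), (0 : k) * a (w.drop i)) = 0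
      simp
    mul_zero := by
      intro a; funext w
      show (∑ i ∈ Finset.range (w.length + 1), a (w.take i) * (0 : k)) = 0
      simp
    mul_assoc := by
      intro a b c; funext w
      show (∑ j ∈ Finset.range (w.length + 1),
        (∑ i ∈ Finset.range ((w.take j).length + 1),
          a ((w.take j).take i) * b ((w.take j).drop i)) * c (w.drop j))
        = ∑ i ∈ Finset.range (w.length + 1),
            a (w.take i) * (∑ j ∈ Finset.range ((w.drop i).length + 1),
              b ((w.drop i).take j) * c ((w.drop i).drop j))
      set n := w.length with hn
      calc
        (∑ j ∈ Finset.range (n + 1),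
          (∑ i ∈ Finset.range ((w.take j).length + 1),
            a ((w.take j).take i) * b ((w.take j).drop i)) * c (w.drop j))
            = ∑ j ∈ Finset.range (n + 1), ∑ i ∈ Finset.range (j + 1),
                a (w.take i) * (b ((w.drop i).take (j - i)) * c ((w.drop i).drop (j - i))) := by
              refine Finset.sum_congr rfl fun j hj => ?_
              rw [Finset.mem_range] at hj
              have hj' : j ≤ n := by omega
              have hlen : (w.take j).length = j := by
                rw [List.length_take]; omega
              rw [Finset.sum_mul, hlen]
              refine Finset.sum_congr rfl fun i hi => ?_
              rw [Finset.mem_range] at hi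
              have hi' : i ≤ j := by omega
              rw [List.take_take, min_eq_left hi', List.drop_take, List.drop_drop,
                Nat.add_sub_cancel' hi', mul_assoc]
        _ = ∑ i ∈ Finset.range (n + 1), ∑ j ∈ Finset.Ico i (n + 1),
                a (w.take i) * (b ((w.drop i).take (j - i)) * c ((w.drop i).drop (j - i))) := by
              simp only [Finset.range_eq_Ico]
              rw [Finset.sum_Ico_Ico_comm]
        _ = ∑ i ∈ Finset.range (n + 1),
            a (w.take i) * (∑ j ∈ Finset.range ((w.drop i).length + 1),
              b ((w.drop i).take j) * c ((w.drop i).drop j)) := by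
              refine Finset.sum_congr rfl fun i hi => ?_
              rw [Finset.mem_range] at hi
              have hi' : i ≤ n := by omega
              rw [Finset.sum_Ico_eq_sum_range, Finset.mul_sum]
              have h1 : n + 1 - i = (w.drop i).length + 1 := by
                rw [List.length_drop]; omega
              rw [h1]
              refine Finset.sum_congr rfl fun j _ => ?_
              rw [Nat.add_sub_cancel_left]
    one_mul := by
      intro a; funext w
      show (∑ i ∈ Finset.range (w.length + 1),
        (if w.take i = [] then (1 : k) else 0) * a (w.drop i)) = a w
      rw [Finset.sum_eq_single 0]
      · simp
      · intro i hi hne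
        rcases Nat.exists_eq_succ_of_ne_zero hne with ⟨j, rfl⟩
        rw [Finset.mem_range] at hi
        rw [if_neg, zero_mul]
        intro h
        rcases List.take_eq_nil_iff.mp h with h' | h'
        · omega
        · subst h'; simp at hi
      · simp
    mul_one := by
      intro a; funext w
      show (∑ i ∈ Finset.range (w.length + 1),
        a (w.take i) * (if w.drop i = [] then (1 : k) else 0)) = a w
      rw [Finset.sum_eq_single w.length]
      · simp
      · intro i hi hne
        rw [Finset.mem_range] at hi
        rw [if_neg, mul_zero]
        intro h
        rw [List.drop_eq_nil_iff] at h
        omega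
      · simp }

noncomputable instance : Algebra k (NCS k) :=
  Algebra.ofModule
    (by
      intro r x y; funext w
      show (∑ i ∈ Finset.range (w.length + 1), (r • x (w.take i)) * y (w.drop i))
        = r • ∑ i ∈ Finset.range (w.length + 1), x (w.take i) * y (w.drop i)
      simp [Finset.mul_sum, mul_assoc])
    (by
      intro r x y; funext w
      show (∑ i ∈ Finset.range (w.length + 1), x (w.take i) * (r • y (w.drop i)))
        = r • ∑ i ∈ Finset.range (w.length + 1), x (w.take i) * y (w.drop i)
      simp [Finset.mul_sum, mul_left_comm])

/-- The generators `e₀, e₁`. -/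
def e (i : Fin 2) : NCS k := fun w => if w = [i] then 1 else 0

end NCS

variable {k : Type} [CommRing k]

/-- Substitution `e_i ↦ a_i` (for `a_i` without constant term): the continuous
algebra endomorphism of `k⟨⟨e₀,e₁⟩⟩` determined by `e_i ↦ a_i`. -/
noncomputable def substE (a : Fin 2 → NCS k) (f : NCS k) : NCS k := fun w =>
  ∑ r ∈ Finset.range (w.length + 1),
    ∑ v : Fin r → Fin 2, f (List.ofFn v) * (((List.ofFn v).map a).prod : NCS k) w

/-- `aut^{(1)}_{(μ,g)}`: the topological algebra automorphism of `k⟨⟨e₀,e₁⟩⟩`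
with `e₀ ↦ μ g e₀ g⁻¹` and `e₁ ↦ μ e₁`. -/
noncomputable def aut1 (μ : k) (g : NCS k) : NCS k → NCS k :=
  substE (fun i => if i = 0 then g * (μ • NCS.e 0) * Ring.inverse g else μ • NCS.e 1)

/-- `Ŵ^DR = k·1 ⊕ V̂^DR e₁`: the closed subalgebra of series supported on the
empty word and on words ending with `e₁`. -/
def What (k : Type) [CommRing k] : Set (NCS k) :=
  {f : NCS k | ∀ w : Word, f w ≠ 0 → w = [] ∨ w.getLast? = some 1}

namespace Stmt13Aux

variable {k : Type} [CommRing k]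

lemma mul_apply (f g : NCS k) (w : Word) :
    (f * g) w = ∑ i ∈ Finset.range (w.length + 1), f (w.take i) * g (w.drop i) := rfl

lemma one_apply (w : Word) : (1 : NCS k) w = if w = [] then 1 else 0 := rfl

lemma smul_apply (c : k) (f : NCS k) (w : Word) : (c • f) w = c * f w := rfl

lemma e_apply (i : Fin 2) (w : Word) : (NCS.e i : NCS k) w = if w = [i] then 1 else 0 := rfl

lemma mul_apply_nil (f g : NCS k) : (f * g) [] = f [] * g [] := by
  rw [mul_apply]; simp

lemma prod_vanish {a : Fin 2 → NCS k} (h0 : ∀ i, a i [] = 0) :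
    ∀ (v w : Word), w.length < v.length → ((v.map a).prod) w = 0 := by
  intro v
  induction v with
  | nil => intro w h; simp at h
  | cons i t ih =>
    intro w h
    rw [List.map_cons, List.prod_cons, mul_apply]
    refine Finset.sum_eq_zero fun j hj => ?_
    have hj' := Finset.mem_range.mp hj
    rcases Nat.eq_zero_or_pos j with rfl | hjpos
    · simp [h0 i]
    · have hlt : (w.drop j).length < t.length := by
        rw [List.length_drop]; simp only [List.length_cons] at h; omega
      rw [ih _ hlt, mul_zero]

def Wn (n : ℕ) : Finset Word :=
  (Finset.range (n+1)).biUnion fun r =>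
    Finset.image (fun v : Fin r → Fin 2 => List.ofFn v) Finset.univ

lemma mem_Wn {u : Word} {n : ℕ} : u ∈ Wn n ↔ u.length ≤ n := by
  simp only [Wn, Finset.mem_biUnion, Finset.mem_range, Finset.mem_image, Finset.mem_univ,
    true_and]
  constructor
  · rintro ⟨r, hr, v, rfl⟩; simp only [List.length_ofFn]; omega
  · intro h; exact ⟨u.length, by omega, u.get, by simp [List.ofFn_get]⟩

lemma substE_eq (a : Fin 2 → NCS k) (f : NCS k) (w : Word) :
    substE a f w = ∑ u ∈ Wn w.length, f u * ((u.map a).prod) w := by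
  rw [Wn, Finset.sum_biUnion]
  · refine Finset.sum_congr rfl fun r _ => ?_
    rw [Finset.sum_image (by intro v _ v' _ hvv; exact List.ofFn_injective hvv)]
  · intro x _ y _ hxy
    apply Finset.disjoint_left.mpr
    rintro u hu hu'
    simp only [Finset.mem_image, Finset.mem_univ, true_and] at hu hu'
    obtain ⟨v, rfl⟩ := hu; obtain ⟨v', h'⟩ := hu'
    apply hxy
    rw [← List.length_ofFn (f := v), ← h', List.length_ofFn]

lemma substE_eq' {a : Fin 2 → NCS k} (h0 : ∀ i, a i [] = 0) (f : NCS k) {w : Word} {N : ℕ}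
    (hN : w.length ≤ N) :
    substE a f w = ∑ u ∈ Wn N, f u * ((u.map a).prod) w := by
  rw [substE_eq]
  refine Finset.sum_subset (fun u hu => mem_Wn.mpr (le_trans (mem_Wn.mp hu) hN)) ?_
  intro u hu hnu
  rw [prod_vanish h0 u w ?_, mul_zero]
  have h2 : ¬ u.length ≤ w.length := fun h => hnu (mem_Wn.mpr h)
  omega

lemma substE_one (a : Fin 2 → NCS k) : substE a (1 : NCS k) = 1 := by
  funext w
  rw [substE_eq, Finset.sum_eq_single ([] : Word)]
  · simp [one_apply]
  · intro u _ hne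
    rw [one_apply, if_neg hne, zero_mul]
  · intro h; exact absurd (mem_Wn.mpr (by simp)) h

lemma substE_mul {a : Fin 2 → NCS k} (h0 : ∀ i, a i [] = 0) (f f' : NCS k) :
    substE a (f * f') = substE a f * substE a f' := by
  funext w
  set n := w.length with hn
  set T : Word → Word → k := fun u1 u2 =>
    ∑ i ∈ Finset.range (n+1),
      f u1 * f' u2 * (((u1.map a).prod) (w.take i) * ((u2.map a).prod) (w.drop i)) with hT
  have hTzero : ∀ u1 u2 : Word, n < u1.length + u2.length → T u1 u2 = 0 := by
    intro u1 u2 h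
    refine Finset.sum_eq_zero fun i _ => ?_
    rcases lt_or_ge (w.take i).length u1.length with hc | hc
    · rw [prod_vanish h0 u1 _ hc, zero_mul, mul_zero]
    · have hlt : (w.drop i).length < u2.length := by
        rw [List.length_drop]; rw [List.length_take] at hc; omega
      rw [prod_vanish h0 u2 _ hlt, mul_zero, mul_zero]
  have key1 : substE a (f * f') w
      = ∑ u ∈ Wn n, ∑ s ∈ Finset.range (u.length + 1), T (u.take s) (u.drop s) := by
    rw [substE_eq]
    refine Finset.sum_congr rfl fun u _ => ?_
    rw [mul_apply, Finset.sum_mul]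
    refine Finset.sum_congr rfl fun s _ => ?_
    have hsplit : ((u.map a).prod) = (((u.take s).map a).prod) * (((u.drop s).map a).prod) := by
      conv_lhs => rw [← List.take_append_drop s u]
      rw [List.map_append, List.prod_append]
    rw [hsplit, mul_apply, Finset.mul_sum]
  have key2 : (∑ u ∈ Wn n, ∑ s ∈ Finset.range (u.length + 1), T (u.take s) (u.drop s))
      = ∑ p ∈ (Wn n ×ˢ Wn n).filter (fun p => p.1.length + p.2.length ≤ n), T p.1 p.2 := by
    rw [Finset.sum_sigma']
    refine Finset.sum_nbij' (fun x => (x.1.take x.2, x.1.drop x.2))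
      (fun p => ⟨p.1 ++ p.2, p.1.length⟩) ?_ ?_ ?_ ?_ ?_
    · rintro ⟨u, s⟩ hx
      dsimp only
      obtain ⟨hu, _⟩ := Finset.mem_sigma.mp hx
      have hu' : u.length ≤ n := mem_Wn.mp hu
      simp only [Finset.mem_filter, Finset.mem_product]
      refine ⟨⟨mem_Wn.mpr ?_, mem_Wn.mpr ?_⟩, ?_⟩ <;>
        simp only [List.length_take, List.length_drop] <;> omega
    · rintro ⟨u1, u2⟩ hp
      dsimp only
      simp only [Finset.mem_filter, Finset.mem_product] at hp
      refine Finset.mem_sigma.mpr ⟨mem_Wn.mpr ?_, Finset.mem_range.mpr ?_⟩ <;>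
        simp only [List.length_append] <;> omega
    · rintro ⟨u, s⟩ hx
      dsimp only
      obtain ⟨_, hs⟩ := Finset.mem_sigma.mp hx
      have hs' : s < u.length + 1 := Finset.mem_range.mp hs
      have h1 : (u.take s) ++ (u.drop s) = u := List.take_append_drop s u
      have h2 : (u.take s).length = s := by rw [List.length_take]; omega
      simp [h1, h2]
    · rintro ⟨u1, u2⟩ _
      dsimp only
      simp [List.take_left, List.drop_left]
    · rintro ⟨u, s⟩ _; rfl
  have key3 : (∑ p ∈ (Wn n ×ˢ Wn n).filter (fun p => p.1.length + p.2.length ≤ n), T p.1 p.2)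
      = ∑ p ∈ Wn n ×ˢ Wn n, T p.1 p.2 := by
    refine Finset.sum_subset (Finset.filter_subset _ _) ?_
    intro p hp hnp
    simp only [Finset.mem_filter, not_and, not_le] at hnp
    exact hTzero p.1 p.2 (hnp hp)
  have hr : ∀ i ∈ Finset.range (n+1),
      substE a f (w.take i) * substE a f' (w.drop i)
        = ∑ u1 ∈ Wn n, ∑ u2 ∈ Wn n,
            f u1 * f' u2 * (((u1.map a).prod) (w.take i) * ((u2.map a).prod) (w.drop i)) := by
    intro i _
    rw [substE_eq' h0 f (show (w.take i).length ≤ n by rw [List.length_take]; omega),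
      substE_eq' h0 f' (show (w.drop i).length ≤ n by rw [List.length_drop]; omega),
      Finset.sum_mul_sum]
    refine Finset.sum_congr rfl fun u1 _ => Finset.sum_congr rfl fun u2 _ => by ring
  have hr' : (∑ i ∈ Finset.range (n+1), substE a f (w.take i) * substE a f' (w.drop i))
      = ∑ i ∈ Finset.range (n+1), ∑ u1 ∈ Wn n, ∑ u2 ∈ Wn n,
          f u1 * f' u2 * (((u1.map a).prod) (w.take i) * ((u2.map a).prod) (w.drop i)) :=
    Finset.sum_congr rfl hr
  have swap : ∀ (E : ℕ → Word → Word → k),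
      (∑ i ∈ Finset.range (n+1), ∑ u1 ∈ Wn n, ∑ u2 ∈ Wn n, E i u1 u2)
      = ∑ u1 ∈ Wn n, ∑ u2 ∈ Wn n, ∑ i ∈ Finset.range (n+1), E i u1 u2 := by
    intro E
    rw [Finset.sum_comm]
    exact Finset.sum_congr rfl fun u1 _ => Finset.sum_comm
  rw [key1, key2, key3, Finset.sum_product, mul_apply, hr', swap]

lemma end_vanish {x : NCS k} {c : k} {w : Word} (hw : w.getLast? ≠ some 1) :
    (x * (c • (NCS.e 1 : NCS k))) w = 0 := by
  rw [mul_apply]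
  refine Finset.sum_eq_zero fun j _ => ?_
  have hz : (c • (NCS.e 1 : NCS k)) (w.drop j) = 0 := by
    rw [smul_apply, e_apply, if_neg, mul_zero]
    intro hdrop
    apply hw
    have h1 := List.take_append_drop j w
    rw [hdrop] at h1
    rw [← h1]
    exact List.getLast?_concat
  rw [hz, mul_zero]

lemma prod_end_vanish {a : Fin 2 → NCS k} {c : k} (hend : a 1 = c • (NCS.e 1 : NCS k))
    {u w : Word} (hu : u.getLast? = some 1) (hw : w.getLast? ≠ some 1) :
    ((u.map a).prod) w = 0 := by
  have hne : u ≠ [] := by intro h; rw [h] at hu; simp at hu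
  have hlast : u.getLast hne = 1 := by
    rw [List.getLast?_eq_getLast hne, Option.some_inj] at hu
    exact hu
  have hu2 : u = u.dropLast ++ [1] := by
    conv_lhs => rw [← List.dropLast_append_getLast hne]
    rw [hlast]
  rw [hu2, List.map_append, List.prod_append, List.map_cons, List.map_nil, List.prod_cons,
    List.prod_nil, mul_one, hend]
  exact end_vanish hw

lemma prod_diag {a : Fin 2 → NCS k} {c : k} (h0 : ∀ i, a i [] = 0)
    (h1 : ∀ i j, a i [j] = if i = j then c else 0) :
    ∀ v w : Word, v.length = w.length →
      ((v.map a).prod) w = if v = w then c ^ w.length else 0 := by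
  intro v
  induction v with
  | nil =>
    intro w hw
    have hw0 : w = [] := List.length_eq_zero_iff.mp hw.symm
    subst hw0
    simp [one_apply]
  | cons i t ih =>
    intro w hw
    cases w with
    | nil => simp at hw
    | cons j w' =>
      simp only [List.length_cons] at hw
      rw [List.map_cons, List.prod_cons, mul_apply, Finset.sum_eq_single 1]
      · have ht : (j :: w').take 1 = [j] := rfl
        have hd : (j :: w').drop 1 = w' := rfl
        rw [ht, hd, h1 i j, ih w' (by omega)]
        by_cases hij : i = j <;> by_cases htw : t = w' <;>
          simp [hij, htw, pow_succ, mul_comm]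
      · intro m hm hne
        have hm' := Finset.mem_range.mp hm
        rcases Nat.eq_zero_or_pos m with rfl | hmpos
        · rw [List.take_zero, h0 i, zero_mul]
        · have hm2 : 2 ≤ m := by omega
          have hlt : ((j :: w').drop m).length < t.length := by
            rw [List.length_drop]
            simp only [List.length_cons] at hm' ⊢
            omega
          rw [prod_vanish h0 t _ hlt, mul_zero]
      · intro hn
        simp only [Finset.mem_range, List.length_cons] at hn
        omega

lemma substE_tri {a : Fin 2 → NCS k} {c : k} (h0 : ∀ i, a i [] = 0)
    (h1 : ∀ i j, a i [j] = if i = j then c else 0) (f : NCS k) (w : Word) :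
    substE a f w =
      (∑ u ∈ (Wn w.length).filter (fun u => u.length < w.length), f u * ((u.map a).prod) w)
        + c ^ w.length * f w := by
  rw [substE_eq, ← Finset.sum_filter_add_sum_filter_not (Wn w.length)
    (fun u => u.length < w.length)]
  congr 1
  rw [Finset.sum_eq_single w]
  · rw [prod_diag h0 h1 w w rfl, if_pos rfl]; ring
  · intro u hu hne
    simp only [Finset.mem_filter, not_lt] at hu
    have hul : u.length = w.length := le_antisymm (mem_Wn.mp hu.1) hu.2
    rw [prod_diag h0 h1 u w hul, if_neg hne, mul_zero]
  · intro hw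
    exact absurd (Finset.mem_filter.mpr ⟨mem_Wn.mpr le_rfl, not_lt.mpr le_rfl⟩) hw

lemma substE_inj {a : Fin 2 → NCS k} {c : kˣ} (h0 : ∀ i, a i [] = 0)
    (h1 : ∀ i j, a i [j] = if i = j then (c : k) else 0) {f f' : NCS k}
    (h : substE a f = substE a f') : f = f' := by
  have main : ∀ n (w : Word), w.length = n → f w = f' w := by
    intro n
    induction n using Nat.strong_induction_on with
    | _ n ih =>
      intro w hw
      have hcf := congrFun h w
      rw [substE_tri h0 h1 f w, substE_tri h0 h1 f' w] at hcf
      have hlow : (∑ u ∈ (Wn w.length).filter (fun u => u.length < w.length),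
          f u * ((u.map a).prod) w)
          = ∑ u ∈ (Wn w.length).filter (fun u => u.length < w.length),
              f' u * ((u.map a).prod) w := by
        refine Finset.sum_congr rfl fun u hu => ?_
        have hul := (Finset.mem_filter.mp hu).2
        rw [ih u.length (by omega) u rfl]
      rw [hlow] at hcf
      have h2 := add_left_cancel hcf
      have hcu : IsUnit ((c : k) ^ w.length) := c.isUnit.pow _
      exact hcu.mul_left_cancel h2
  funext w
  exact main w.length w rfl

noncomputable def preim (c : kˣ) (a : Fin 2 → NCS k) (h : NCS k) : Word → k := fun w =>
  (↑c⁻¹ : k) ^ w.length *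
    (h w - ∑ u ∈ ((Wn w.length).filter fun u => u.length < w.length).attach,
      preim c a h u.1 * ((u.1.map a).prod) w)
termination_by w => w.length
decreasing_by
  exact (Finset.mem_filter.mp u.2).2

lemma preim_spec {a : Fin 2 → NCS k} {c : kˣ} (h0 : ∀ i, a i [] = 0)
    (h1 : ∀ i j, a i [j] = if i = j then (c : k) else 0) (h : NCS k) :
    substE a (preim c a h) = h := by
  funext w
  refine (substE_tri h0 h1 (preim c a h) w).trans ?_
  have hpw : preim c a h w = (↑c⁻¹ : k) ^ w.length *
      (h w - ∑ u ∈ ((Wn w.length).filter fun u => u.length < w.length).attach,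
        preim c a h u.1 * ((u.1.map a).prod) w) := by
    rw [preim]
  rw [Finset.sum_attach ((Wn w.length).filter fun u => u.length < w.length)
    (fun u => preim c a h u * ((u.map a).prod) w)] at hpw
  rw [hpw]
  have hcc : (c : k) ^ w.length * ((↑c⁻¹ : k) ^ w.length) = 1 := by
    rw [← mul_pow, Units.mul_inv, one_pow]
  set S := ∑ u ∈ (Wn w.length).filter (fun u => u.length < w.length),
    preim c a h u * ((u.map a).prod) w with hS
  linear_combination (h w - S) * hcc

lemma preim_What {a : Fin 2 → NCS k} {c : kˣ} (hend : a 1 = (c : k) • (NCS.e 1 : NCS k))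
    {h : NCS k} (hh : h ∈ What k) : (preim c a h : NCS k) ∈ What k := by
  have main : ∀ n (w : Word), w.length = n →
      ¬(w = [] ∨ w.getLast? = some 1) → preim c a h w = 0 := by
    intro n
    induction n using Nat.strong_induction_on with
    | _ n ih =>
      intro w hw hcon
      push_neg at hcon
      rw [preim]
      have hhw : h w = 0 := by
        by_contra hne
        rcases hh w hne with h' | h'
        · exact hcon.1 h'
        · exact hcon.2 h'
      have hSz : (∑ u ∈ ((Wn w.length).filter fun u => u.length < w.length).attach,
          preim c a h u.1 * ((u.1.map a).prod) w) = 0 := by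
        refine Finset.sum_eq_zero fun u _ => ?_
        by_cases hpu : preim c a h u.1 = 0
        · rw [hpu, zero_mul]
        · have hlen : u.1.length < w.length := (Finset.mem_filter.mp u.2).2
          have hu' : u.1 = [] ∨ u.1.getLast? = some 1 := by
            by_contra hc
            exact hpu (ih u.1.length (by omega) u.1 rfl hc)
          rcases hu' with h' | h'
          · rw [h', List.map_nil, List.prod_nil, one_apply, if_neg hcon.1, mul_zero]
          · rw [prod_end_vanish hend h' hcon.2, mul_zero]
      rw [hhw, hSz, sub_zero, mul_zero]
  intro w hne
  by_contra hcon
  exact hne (main w.length w rfl hcon)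

lemma substE_mapsTo {a : Fin 2 → NCS k} {c : k} (hend : a 1 = c • (NCS.e 1 : NCS k))
    {f : NCS k} (hf : f ∈ What k) : substE a f ∈ What k := by
  intro w hne
  by_contra hcon
  push_neg at hcon
  apply hne
  rw [substE_eq]
  refine Finset.sum_eq_zero fun u _ => ?_
  by_cases hfu : f u = 0
  · rw [hfu, zero_mul]
  · rcases hf u hfu with rfl | hu
    · rw [List.map_nil, List.prod_nil, one_apply, if_neg hcon.1, mul_zero]
    · rw [prod_end_vanish hend hu hcon.2, mul_zero]

end Stmt13Aux

/-- For `μ ∈ k^×` and `g` invertible, the automorphism `aut^{(1)}_{(μ,g)}` of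
`k⟨⟨e₀,e₁⟩⟩` (`e₀ ↦ μ g e₀ g⁻¹`, `e₁ ↦ μ e₁`) restricts to a topological
algebra automorphism of the completed subalgebra `Ŵ^DR = k1 ⊕ V̂^DR e₁`:
it maps `Ŵ^DR` bijectively onto itself, and its restriction is an algebra
morphism. -/
theorem stmt13 (μ : kˣ) (g : NCS k) (hg : IsUnit g) :
    Set.MapsTo (aut1 (μ : k) g) (What k) (What k) ∧
    Set.BijOn (aut1 (μ : k) g) (What k) (What k) ∧
    (aut1 (μ : k) g 1 = 1) ∧
    (∀ f ∈ What k, ∀ f' ∈ What k,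
      aut1 (μ : k) g (f * f') = aut1 (μ : k) g f * aut1 (μ : k) g f') := by
  classical
  open Stmt13Aux in
  set a : Fin 2 → NCS k := fun i =>
    if i = 0 then g * ((μ : k) • NCS.e 0) * Ring.inverse g else (μ : k) • NCS.e 1 with ha
  have haut : aut1 (μ : k) g = substE a := rfl
  have hend : a 1 = (μ : k) • (NCS.e 1 : NCS k) := by
    rw [ha]; norm_num
  have ha0 : a 0 = g * ((μ : k) • NCS.e 0) * Ring.inverse g := by
    rw [ha]; norm_num
  have hginv : g [] * (Ring.inverse g) [] = 1 := by
    have hcancel := Ring.mul_inverse_cancel g hg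
    have h2 := congrFun hcancel ([] : Word)
    rwa [Stmt13Aux.mul_apply_nil, Stmt13Aux.one_apply, if_pos rfl] at h2
  have hsingle : ∀ (x y : NCS k) (j : Fin 2), (x * y) [j] = x [] * y [j] + x [j] * y [] := by
    intro x y j
    rw [Stmt13Aux.mul_apply]
    show (∑ i ∈ Finset.range 2, _) = _
    rw [Finset.sum_range_succ, Finset.sum_range_one]
    rfl
  have h0 : ∀ i, a i [] = 0 := by
    intro i
    fin_cases i
    · show a 0 [] = 0
      rw [show a 0 = _ from ha0, Stmt13Aux.mul_apply_nil, Stmt13Aux.mul_apply_nil,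
        Stmt13Aux.smul_apply, Stmt13Aux.e_apply, if_neg (by simp)]
      ring
    · show a 1 [] = 0
      rw [show a 1 = _ from hend, Stmt13Aux.smul_apply, Stmt13Aux.e_apply, if_neg (by simp)]
      ring
  have h1 : ∀ i j, a i [j] = if i = j then (μ : k) else 0 := by
    intro i j
    fin_cases i
    · show a 0 [j] = if (0 : Fin 2) = j then (μ : k) else 0
      rw [show a 0 = _ from ha0, hsingle, hsingle, Stmt13Aux.mul_apply_nil]
      simp only [Stmt13Aux.smul_apply, Stmt13Aux.e_apply]
      rw [if_neg (show ¬(([] : Word) = [(0 : Fin 2)]) by simp)]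
      by_cases hj : j = (0 : Fin 2)
      · subst hj
        rw [if_pos rfl, if_pos rfl]
        linear_combination (μ : k) * hginv
      · rw [if_neg (show ¬(([j] : Word) = [(0 : Fin 2)]) by simpa using hj),
          if_neg (show ¬((0 : Fin 2) = j) from fun hh => hj hh.symm)]
        ring
    · show a 1 [j] = if (1 : Fin 2) = j then (μ : k) else 0
      rw [show a 1 = _ from hend, Stmt13Aux.smul_apply, Stmt13Aux.e_apply]
      by_cases hj : j = (1 : Fin 2)
      · subst hj; rw [if_pos rfl, if_pos rfl, mul_one]
      · rw [if_neg (by simpa using hj), if_neg (by simpa using (Ne.symm hj))]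
        ring
  have hmaps : Set.MapsTo (substE a) (What k) (What k) :=
    fun f hf => Stmt13Aux.substE_mapsTo hend hf
  have hinj : Set.InjOn (substE a) (What k) :=
    fun x _ y _ hxy => Stmt13Aux.substE_inj (c := μ) h0 h1 hxy
  have hsurj : Set.SurjOn (substE a) (What k) (What k) := by
    intro h hh
    exact ⟨Stmt13Aux.preim μ a h, Stmt13Aux.preim_What hend hh,
      Stmt13Aux.preim_spec h0 h1 h⟩
  rw [haut]
  exact ⟨hmaps, ⟨hmaps, hinj, hsurj⟩, Stmt13Aux.substE_one a,
    fun f _ f' _ => Stmt13Aux.substE_mul h0 f f'⟩
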